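/- Liouville consequence for the hyperbolic-angle inequality (Euclidean model case): Let n ≥ 1, let K > 0, and let v : ℝⁿ → ℝ be a C² function with v(x) ≥ 0 for all x, satisfying the differential inequality (1/2) Δv(x) ≥ K · v(x)² for all x ∈ ℝⁿ. Then v vanishes identically on ℝⁿ. -/

import Mathlib

/-!
Osserman's barrier argument. On a ball `B(y, R)` the function `w = A / (R² - |x - y|²)²`
blows up at the boundary and, for `A = (2n + 12) R² / K`, satisfies `½ Δw ≤ K w²`. If `v > w`
somewhere in the ball, then `v - w` has an interior positive maximum `p`, where
`K v(p)² ≤ ½ Δv(p) ≤ ½ Δw(p) ≤ K w(p)² < K v(p)²`. Hence `v ≤ w` on the ball; in particular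
`v(y) ≤ w(y) = (2n + 12) / (K R²)`, and letting `R → ∞` gives `v(y) ≤ 0`.
-/

/-- The Euclidean Laplacian of `u : ℝⁿ → ℝ`, defined as the trace of the Hessian,
i.e. the sum of the second derivatives in the directions of the standard
orthonormal basis. -/
noncomputable def euclideanLaplacian {n : ℕ} (u : EuclideanSpace ℝ (Fin n) → ℝ)
    (x : EuclideanSpace ℝ (Fin n)) : ℝ :=
  ∑ i : Fin n,
    iteratedFDeriv ℝ 2 u x ![EuclideanSpace.single i 1, EuclideanSpace.single i 1]

open Filter Topology Metric

theorem IsLocalMax.deriv_deriv_nonpos {f : ℝ → ℝ} {a : ℝ} (h : IsLocalMax f a)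
    (hc : ContinuousAt f a) : deriv (deriv f) a ≤ 0 := by
  by_contra! hpos
  -- the second derivative test makes `a` also a local minimum, so `f` is locally constant
  have hconst : f =ᶠ[𝓝 a] fun _ ↦ f a :=
    ((isLocalMin_of_deriv_deriv_pos hpos h.deriv_eq_zero hc).and h).mono
      fun x hx ↦ le_antisymm hx.2 hx.1
  have hderiv : deriv f =ᶠ[𝓝 a] fun _ ↦ 0 := hconst.deriv.trans (by simp)
  simp [hderiv.deriv_eq] at hpos

theorem deriv_deriv_eq_of_hasDerivAt {g g' : ℝ → ℝ} {a g'' : ℝ}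
    (hg : ∀ᶠ t in 𝓝 a, HasDerivAt g (g' t) t) (hg' : HasDerivAt g' g'' a) :
    deriv (deriv g) a = g'' :=
  (EventuallyEq.deriv_eq (hg.mono fun _ ht ↦ ht.deriv)).trans hg'.deriv

theorem deriv_deriv_div_quadratic_sq (A b c : ℝ) (hc : c ≠ 0) :
    deriv (deriv fun t : ℝ ↦ A / (c - 2 * b * t - t ^ 2) ^ 2) 0
      = 24 * A * b ^ 2 / c ^ 4 + 4 * A / c ^ 3 := by
  set q : ℝ → ℝ := fun t ↦ c - 2 * b * t - t ^ 2
  have hq : ∀ t, HasDerivAt q (-2 * (b + t)) t := fun t ↦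
    ((((hasDerivAt_id' t).const_mul (2 * b)).const_sub c).fun_sub (hasDerivAt_pow 2 t)).congr_deriv
      (by simp only [mul_one, Nat.cast_ofNat, Nat.add_one_sub_one, pow_one]; ring)
  have hqc : q 0 = c := by simp [q]
  have hq0 : q 0 ≠ 0 := hqc ▸ hc
  have h1 : ∀ᶠ t in 𝓝 (0 : ℝ), HasDerivAt (fun t ↦ A / q t ^ 2) (4 * A * (b + t) / q t ^ 3) t :=
    ((hq 0).continuousAt.eventually_ne hq0).mono fun t ht ↦
      ((hasDerivAt_const t A).fun_div ((hq t).fun_pow 2) (pow_ne_zero 2 ht)).congr_deriv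
        (by field_simp; ring)
  have h2 : HasDerivAt (fun t ↦ 4 * A * (b + t) / q t ^ 3)
      (24 * A * b ^ 2 / c ^ 4 + 4 * A / c ^ 3) 0 :=
    ((((hasDerivAt_id' (0 : ℝ)).const_add b).const_mul (4 * A)).fun_div ((hq 0).fun_pow 3)
      (pow_ne_zero 3 hq0)).congr_deriv (by rw [hqc]; field_simp; ring)
  exact deriv_deriv_eq_of_hasDerivAt h1 h2

section SecondDerivativeAlongLines

variable {E : Type*} [NormedAddCommGroup E] [NormedSpace ℝ E]

theorem hasDerivAt_add_smul (x e : E) (t : ℝ) : HasDerivAt (fun s : ℝ ↦ x + s • e) e t := by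
  simpa using ((hasDerivAt_id t).smul_const e).const_add x

theorem iteratedFDeriv_two_apply_self_eq_deriv_deriv {f : E → ℝ} {x : E}
    (hf : ContDiffAt ℝ 2 f x) (e : E) :
    iteratedFDeriv ℝ 2 f x ![e, e] = deriv (deriv fun t : ℝ ↦ f (x + t • e)) 0 := by
  have hline : Tendsto (fun t : ℝ ↦ x + t • e) (𝓝 0) (𝓝 x) := by
    simpa using (hasDerivAt_add_smul x e 0).continuousAt.tendsto
  have hdiff : ∀ᶠ t in 𝓝 (0 : ℝ), DifferentiableAt ℝ f (x + t • e) :=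
    hline.eventually ((hf.eventually (by simp)).mono fun _ hz ↦ hz.differentiableAt two_ne_zero)
  have hfderiv : DifferentiableAt ℝ (fderiv ℝ f) x :=
    (hf.fderiv_right (m := 1) (by norm_num)).differentiableAt one_ne_zero
  have h1 : ∀ᶠ t in 𝓝 (0 : ℝ),
      HasDerivAt (fun t : ℝ ↦ f (x + t • e)) (fderiv ℝ f (x + t • e) e) t :=
    hdiff.mono fun t ht ↦ ht.hasFDerivAt.comp_hasDerivAt t (hasDerivAt_add_smul x e t)
  have h2 : HasDerivAt (fun t : ℝ ↦ fderiv ℝ f (x + t • e)) (fderiv ℝ (fderiv ℝ f) x e) 0 :=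
    hfderiv.hasFDerivAt.comp_hasDerivAt_of_eq 0 (hasDerivAt_add_smul x e 0) (by simp)
  rw [iteratedFDeriv_two_apply]
  exact (deriv_deriv_eq_of_hasDerivAt h1 (by simpa using h2.clm_apply (hasDerivAt_const 0 e))).symm

theorem IsLocalMax.iteratedFDeriv_two_apply_self_nonpos {f : E → ℝ} {x : E}
    (h : IsLocalMax f x) (hf : ContDiffAt ℝ 2 f x) (e : E) :
    iteratedFDeriv ℝ 2 f x ![e, e] ≤ 0 := by
  have hline : ContinuousAt (fun t : ℝ ↦ x + t • e) 0 := (hasDerivAt_add_smul x e 0).continuousAt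
  rw [iteratedFDeriv_two_apply_self_eq_deriv_deriv hf]
  refine IsLocalMax.deriv_deriv_nonpos ?_ (hf.continuousAt.comp_of_eq hline (by simp))
  simpa [IsLocalMax, IsMaxFilter] using (hline.tendsto.mono_right (by simp)).eventually h

end SecondDerivativeAlongLines

theorem euclideanLaplacian_le_of_isLocalMax_sub {n : ℕ} {v w : EuclideanSpace ℝ (Fin n) → ℝ}
    {p : EuclideanSpace ℝ (Fin n)} (hv : ContDiffAt ℝ 2 v p) (hw : ContDiffAt ℝ 2 w p)
    (hmax : IsLocalMax (v - w) p) :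
    euclideanLaplacian v p ≤ euclideanLaplacian w p := by
  refine Finset.sum_le_sum fun i _ ↦ ?_
  have := hmax.iteratedFDeriv_two_apply_self_nonpos (hv.sub hw) (EuclideanSpace.single i 1)
  rw [iteratedFDeriv_sub_apply hv hw] at this
  simpa [sub_nonpos] using this

theorem exists_isLocalMax_of_lt_on_sphere {X : Type*} [PseudoMetricSpace X] [ProperSpace X]
    {f : X → ℝ} {y z : X} {r : ℝ} (hz : z ∈ closedBall y r) (hf : ContinuousOn f (closedBall y r))
    (hlt : ∀ x ∈ sphere y r, f x < f z) : ∃ p ∈ ball y r, IsLocalMax f p ∧ f z ≤ f p := by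
  obtain ⟨p, hp, hmax⟩ := (isCompact_closedBall y r).exists_isMaxOn ⟨z, hz⟩ hf
  have hfp : f z ≤ f p := hmax hz
  have hpball : p ∈ ball y r := by
    by_contra hnot
    have hpsphere : p ∈ sphere y r := by
      rw [← closedBall_sdiff_ball]
      exact ⟨hp, hnot⟩
    exact (hlt p hpsphere).not_ge hfp
  exact ⟨p, hpball, hmax.isLocalMax (mem_of_superset (isOpen_ball.mem_nhds hpball)
    ball_subset_closedBall), hfp⟩

theorem tendsto_div_sq_sub_sq_nhdsLT {A R : ℝ} (hA : 0 < A) (hR : 0 < R) :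
    Tendsto (fun r ↦ A / (R ^ 2 - r ^ 2) ^ 2) (𝓝[<] R) atTop := by
  have hzero : Tendsto (fun r ↦ (R ^ 2 - r ^ 2) ^ 2) (𝓝 R) (𝓝 0) :=
    (by fun_prop : Continuous fun r : ℝ ↦ (R ^ 2 - r ^ 2) ^ 2).tendsto' R 0 (by simp)
  have hpos : ∀ᶠ r in 𝓝[<] R, 0 < (R ^ 2 - r ^ 2) ^ 2 := by
    filter_upwards [Ioo_mem_nhdsLT hR] with r hr
    have : r ^ 2 < R ^ 2 := by nlinarith [hr.1, hr.2]
    positivity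
  have := tendsto_nhdsWithin_iff.2 ⟨hzero.mono_left nhdsWithin_le_nhds, hpos⟩
  simpa [div_eq_mul_inv] using this.inv_tendsto_nhdsGT_zero.const_mul_atTop hA

section Barrier

variable {E : Type*} [NormedAddCommGroup E]

noncomputable def blowUpBarrier (A R : ℝ) (y x : E) : ℝ := A / (R ^ 2 - ‖x - y‖ ^ 2) ^ 2

theorem blowUpBarrier_self (A R : ℝ) (y : E) : blowUpBarrier A R y y = A / R ^ 4 := by
  simp [blowUpBarrier, ← pow_mul]

variable [InnerProductSpace ℝ E] {A R : ℝ} {y x : E}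

theorem contDiffAt_blowUpBarrier {n : WithTop ℕ∞} (hx : ‖x - y‖ ^ 2 ≠ R ^ 2) :
    ContDiffAt ℝ n (blowUpBarrier A R y) x :=
  contDiffAt_const.div ((contDiffAt_const.sub
    ((contDiff_norm_sq ℝ).contDiffAt.comp x (contDiffAt_id.sub contDiffAt_const))).pow 2)
    (pow_ne_zero 2 (sub_ne_zero.2 hx.symm))

theorem blowUpBarrier_add_smul (A R : ℝ) (y x : E) {e : E} (he : ‖e‖ = 1) (t : ℝ) :
    blowUpBarrier A R y (x + t • e)
      = A / (R ^ 2 - ‖x - y‖ ^ 2 - 2 * inner ℝ (x - y) e * t - t ^ 2) ^ 2 := by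
  rw [blowUpBarrier, add_sub_right_comm, norm_add_sq_real, real_inner_smul_right, norm_smul, he]
  simp only [Real.norm_eq_abs, mul_one, sq_abs]
  ring_nf

theorem iteratedFDeriv_two_blowUpBarrier (hx : ‖x - y‖ ^ 2 ≠ R ^ 2) {e : E} (he : ‖e‖ = 1) :
    iteratedFDeriv ℝ 2 (blowUpBarrier A R y) x ![e, e]
      = 24 * A * inner ℝ (x - y) e ^ 2 / (R ^ 2 - ‖x - y‖ ^ 2) ^ 4
        + 4 * A / (R ^ 2 - ‖x - y‖ ^ 2) ^ 3 := by
  rw [iteratedFDeriv_two_apply_self_eq_deriv_deriv (contDiffAt_blowUpBarrier hx),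
    funext (blowUpBarrier_add_smul A R y x he)]
  exact deriv_deriv_div_quadratic_sq _ _ _ (sub_ne_zero.2 hx.symm)

end Barrier

section EuclideanBarrier

variable {n : ℕ} {A R : ℝ} {y x : EuclideanSpace ℝ (Fin n)}

theorem euclideanLaplacian_blowUpBarrier (hx : ‖x - y‖ ^ 2 ≠ R ^ 2) :
    euclideanLaplacian (blowUpBarrier A R y) x
      = 24 * A * ‖x - y‖ ^ 2 / (R ^ 2 - ‖x - y‖ ^ 2) ^ 4
        + 4 * n * A / (R ^ 2 - ‖x - y‖ ^ 2) ^ 3 := by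
  have hterm : ∀ i : Fin n, iteratedFDeriv ℝ 2 (blowUpBarrier A R y) x
      ![EuclideanSpace.single i 1, EuclideanSpace.single i 1]
        = 24 * A * (x - y) i ^ 2 / (R ^ 2 - ‖x - y‖ ^ 2) ^ 4
          + 4 * A / (R ^ 2 - ‖x - y‖ ^ 2) ^ 3 :=
    fun i ↦ by simp [iteratedFDeriv_two_blowUpBarrier hx, EuclideanSpace.inner_single_right]
  rw [euclideanLaplacian, Finset.sum_congr rfl fun i _ ↦ hterm i, Finset.sum_add_distrib,
    ← Finset.sum_div, ← Finset.mul_sum, ← EuclideanSpace.real_norm_sq_eq]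
  simp only [Finset.sum_const, Finset.card_univ, Fintype.card_fin, nsmul_eq_mul]
  ring

theorem half_euclideanLaplacian_blowUpBarrier_le {K : ℝ} (hA : 0 ≤ A)
    (hKA : (2 * n + 12) * R ^ 2 ≤ K * A) (hx : ‖x - y‖ < R) :
    1 / 2 * euclideanLaplacian (blowUpBarrier A R y) x ≤ K * blowUpBarrier A R y x ^ 2 := by
  set s := ‖x - y‖ ^ 2
  have hsR : s < R ^ 2 := pow_lt_pow_left₀ hx (norm_nonneg _) two_ne_zero
  have hs : 0 ≤ s := by positivity
  set c := R ^ 2 - s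
  have hc : 0 < c := sub_pos.2 hsR
  rw [euclideanLaplacian_blowUpBarrier hsR.ne, blowUpBarrier]
  calc 1 / 2 * (24 * A * s / c ^ 4 + 4 * n * A / c ^ 3)
      = (12 * A * s + 2 * n * A * c) / c ^ 4 := by field_simp; ring
    _ ≤ (2 * n + 12) * R ^ 2 * A / c ^ 4 := by
        gcongr
        nlinarith [mul_nonneg (Nat.cast_nonneg n : (0 : ℝ) ≤ n) hA]
    _ ≤ K * A * A / c ^ 4 := by gcongr
    _ = K * (A / c ^ 2) ^ 2 := by field_simp

end EuclideanBarrier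

theorem le_blowUpBarrier_of_half_euclideanLaplacian_ge {n : ℕ} {K A R : ℝ} (hK : 0 < K)
    (hA : 0 < A) (hKA : (2 * n + 12) * R ^ 2 ≤ K * A) {v : EuclideanSpace ℝ (Fin n) → ℝ}
    (hv : ContDiff ℝ 2 v) (hineq : ∀ x, K * v x ^ 2 ≤ 1 / 2 * euclideanLaplacian v x)
    {y z : EuclideanSpace ℝ (Fin n)} (hz : z ∈ ball y R) : v z ≤ blowUpBarrier A R y z := by
  set w := blowUpBarrier A R y
  by_contra! hwz
  obtain ⟨M, hM⟩ := (isCompact_closedBall y R).bddAbove_image hv.continuous.continuousOn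
  obtain ⟨r, hMr, hzr, hrR⟩ : ∃ r, M ≤ A / (R ^ 2 - r ^ 2) ^ 2 ∧ dist z y < r ∧ r < R :=
    (((tendsto_div_sq_sub_sq_nhdsLT hA (pos_of_mem_ball hz)).eventually_ge_atTop M).and
      (Ioo_mem_nhdsLT (mem_ball.1 hz))).exists.imp fun _ hr ↦ ⟨hr.1, hr.2.1, hr.2.2⟩
  have hcont : ContinuousOn (v - w) (closedBall y r) := fun x hx ↦
    have hxR : ‖x - y‖ < R := (mem_closedBall_iff_norm.1 hx).trans_lt hrR
    (hv.continuous.continuousAt.sub (contDiffAt_blowUpBarrier (n := 0)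
      (pow_lt_pow_left₀ hxR (norm_nonneg _) two_ne_zero).ne).continuousAt).continuousWithinAt
  have hsphere : ∀ x ∈ sphere y r, (v - w) x < (v - w) z := by
    intro x hx
    have hwx : w x = A / (R ^ 2 - r ^ 2) ^ 2 := by
      rw [mem_sphere_iff_norm] at hx
      simp [w, blowUpBarrier, hx]
    have := hM ⟨x, sphere_subset_closedBall.trans (closedBall_subset_closedBall hrR.le) hx, rfl⟩
    simp only [Pi.sub_apply]
    linarith
  obtain ⟨p, hp, hmax, hzp⟩ :=
    exists_isLocalMax_of_lt_on_sphere (ball_subset_closedBall hzr) hcont hsphere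
  have hpR : ‖p - y‖ < R := (mem_ball_iff_norm.1 hp).trans hrR
  have hwp : 0 ≤ w p := by simp only [w, blowUpBarrier]; positivity
  have hwvp : w p < v p := by simp only [Pi.sub_apply] at hzp; linarith
  have hlap := euclideanLaplacian_le_of_isLocalMax_sub hv.contDiffAt
    (contDiffAt_blowUpBarrier (pow_lt_pow_left₀ hpR (norm_nonneg _) two_ne_zero).ne) hmax
  have hbarrier := half_euclideanLaplacian_blowUpBarrier_le hA.le hKA hpR
  have hsq : K * w p ^ 2 < K * v p ^ 2 := by gcongr
  linarith [hineq p]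

theorem liouville_hyperbolic_angle_general {n : ℕ}
    (K : ℝ) (hK : 0 < K)
    (v : EuclideanSpace ℝ (Fin n) → ℝ) (hv : ContDiff ℝ 2 v)
    (hv_nonneg : ∀ x, 0 ≤ v x)
    (hineq : ∀ x, K * (v x) ^ 2 ≤ (1 / 2) * euclideanLaplacian v x) :
    ∀ x, v x = 0 := by
  intro x
  have hbound : ∀ R > 0, v x ≤ (2 * n + 12) / (K * R ^ 2) := fun R hR ↦ by
    have := le_blowUpBarrier_of_half_euclideanLaplacian_ge hK (A := (2 * n + 12) * R ^ 2 / K)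
      (by positivity) (mul_div_cancel₀ _ hK.ne').ge hv hineq (mem_ball_self (x := x) hR)
    rw [blowUpBarrier_self] at this
    exact this.trans_eq (by field_simp)
  have hdecay : Tendsto (fun R : ℝ ↦ (2 * n + 12) / (K * R ^ 2)) atTop (𝓝 0) :=
    tendsto_const_nhds.div_atTop ((tendsto_pow_atTop two_ne_zero).const_mul_atTop hK)
  exact le_antisymm (ge_of_tendsto hdecay ((eventually_gt_atTop (0 : ℝ)).mono hbound)) (hv_nonneg x)

/-- Liouville consequence for the hyperbolic-angle inequality (Euclidean model
case): a nonnegative `C²` function `v` on `ℝⁿ` satisfying `(1/2) Δv ≥ K v²`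
for a constant `K > 0` vanishes identically. -/
theorem liouville_hyperbolic_angle {n : ℕ} (hn : 1 ≤ n)
    (K : ℝ) (hK : 0 < K)
    (v : EuclideanSpace ℝ (Fin n) → ℝ) (hv : ContDiff ℝ 2 v)
    (hv_nonneg : ∀ x, 0 ≤ v x)
    (hineq : ∀ x, K * (v x) ^ 2 ≤ (1 / 2) * euclideanLaplacian v x) :
    ∀ x, v x = 0 :=
  liouville_hyperbolic_angle_general K hK v hv hv_nonneg hineq
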